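/- The projected Bellman operator g maps Ξ̃ into Ξ̃ and is a μ_D-contraction on Ξ̃ with respect to the norm ‖Q̃‖_{D̃} = √(Q̃^⊤ D̃ Q̃): for all Q̃, Q̃' ∈ Ξ̃, ‖g(Q̃) − g(Q̃')‖_{D̃} ≤ μ_D ‖Q̃ − Q̃'‖_{D̃}. Consequently g has a unique fixed point Q̃* in Ξ̃, and the set of all fixed points of g in ℝ^W is exactly {Q̃* + c·1_W : c ∈ ℝ}, where 1_W is the all-ones vector in ℝ^W. -/

import Mathlib

open Finset Matrix

/-- The weighted Euclidean norm `‖x‖_D = √(xᵀ D x)` with `D = diag(π)`. -/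
noncomputable def Dnorm {Z : Type*} [Fintype Z] (π : Z → ℝ) (x : Z → ℝ) : ℝ :=
  Real.sqrt (∑ z, π z * x z ^ 2)

/-- The full feature matrix `Φ̃ ∈ ℝ^{Z×W}`: `Φ̃(z,w) = 1` if `m z = w`, else `0`. -/
noncomputable def PhiTilde {Z W : Type*} [Fintype Z] [Fintype W] [DecidableEq W]
    (m : Z → W) : Matrix Z W ℝ :=
  Matrix.of fun z w => if m z = w then 1 else 0

/-- The marginal probability `v(w) = ∑_{z : m z = w} π z` (the diagonal of
`D̃ = Φ̃ᵀ D Φ̃`). -/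
noncomputable def vmarg {Z W : Type*} [Fintype Z] [Fintype W] [DecidableEq W]
    (m : Z → W) (π : Z → ℝ) (w : W) : ℝ :=
  ∑ z ∈ Finset.univ.filter (fun z => m z = w), π z

/-- The projection matrix `Π = D̃⁻¹ Φ̃ᵀ D`: its row indexed by `w` is the conditional
distribution of `z` given `m z = w` under `π`. -/
noncomputable def PiProj {Z W : Type*} [Fintype Z] [Fintype W] [DecidableEq W]
    (m : Z → W) (π : Z → ℝ) : Matrix W Z ℝ :=
  Matrix.of fun w z => if m z = w then π z / vmarg m π w else 0

/-- The norm `‖Q̃‖_{D̃} = √(Q̃ᵀ D̃ Q̃)` on `ℝ^W`. -/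
noncomputable def DtildeNorm {Z W : Type*} [Fintype Z] [Fintype W] [DecidableEq W]
    (m : Z → W) (π : Z → ℝ) (Qt : W → ℝ) : ℝ :=
  Real.sqrt (∑ w, vmarg m π w * Qt w ^ 2)

/-- The average-reward Bellman operator `TD(Q) = r − (πᵀr)·1 + PQ`. -/
noncomputable def TDop {Z : Type*} [Fintype Z]
    (P : Matrix Z Z ℝ) (π r : Z → ℝ) (Q : Z → ℝ) : Z → ℝ :=
  fun z => r z - (∑ z', π z' * r z') + P.mulVec Q z

/-- The projected Bellman operator `g(Q̃) = Π TD(Φ̃ Q̃)`. -/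
noncomputable def gOp {Z W : Type*} [Fintype Z] [Fintype W] [DecidableEq W]
    (P : Matrix Z Z ℝ) (π r : Z → ℝ) (m : Z → W) (Qt : W → ℝ) : W → ℝ :=
  (PiProj m π).mulVec (TDop P π r ((PhiTilde m).mulVec Qt))

/-- The mean-zero subspace `Ξ̃ = {Q̃ : πᵀΦ̃Q̃ = 0}`. -/
def XiTilde {Z W : Type*} [Fintype Z] [Fintype W] [DecidableEq W]
    (π : Z → ℝ) (m : Z → W) : Set (W → ℝ) :=
  {Qt | ∑ z, π z * ((PhiTilde m).mulVec Qt) z = 0}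

set_option maxHeartbeats 1000000

section Helpers
variable {Z W : Type*} [Fintype Z] [Fintype W] [DecidableEq W] (m : Z → W) (π : Z → ℝ)

lemma phi_mulVec (Qt : W → ℝ) : (PhiTilde m).mulVec Qt = fun z => Qt (m z) := by
  funext z
  simp [PhiTilde, Matrix.mulVec, dotProduct, Finset.sum_ite_eq]

lemma sum_fiber (f : W → ℝ) : ∑ z, π z * f (m z) = ∑ w, vmarg m π w * f w := by
  rw [← Finset.sum_fiberwise Finset.univ m (fun z => π z * f (m z))]
  refine Finset.sum_congr rfl fun w _ => ?_
  rw [vmarg, Finset.sum_mul]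
  refine Finset.sum_congr rfl fun z hz => ?_
  rw [(Finset.mem_filter.mp hz).2]

lemma pi_mulVec (Q : Z → ℝ) (w : W) :
    (PiProj m π).mulVec Q w
      = (∑ z ∈ Finset.univ.filter (fun z => m z = w), π z * Q z) / vmarg m π w := by
  rw [Matrix.mulVec, dotProduct, Finset.sum_div]
  rw [show ∑ z ∈ Finset.univ.filter (fun z => m z = w), π z * Q z / vmarg m π w
      = ∑ z, (if m z = w then π z * Q z / vmarg m π w else 0) from
    Finset.sum_filter _ _]
  refine Finset.sum_congr rfl fun z _ => ?_
  simp only [PiProj, Matrix.of_apply]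
  split <;> ring

lemma vmarg_pos (hπ : ∀ z, 0 < π z) (hm : Function.Surjective m) (w : W) :
    0 < vmarg m π w := by
  obtain ⟨z, hz⟩ := hm w
  exact Finset.sum_pos' (fun z _ => (hπ z).le)
    ⟨z, Finset.mem_filter.mpr ⟨Finset.mem_univ z, hz⟩, hπ z⟩

lemma pi_nonexpansive_sq (hπ : ∀ z, 0 < π z) (hm : Function.Surjective m) (Q : Z → ℝ) :
    ∑ w, vmarg m π w * ((PiProj m π).mulVec Q w) ^ 2 ≤ ∑ z, π z * Q z ^ 2 := by
  have hv := vmarg_pos m π hπ hm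
  calc ∑ w, vmarg m π w * ((PiProj m π).mulVec Q w) ^ 2
      ≤ ∑ w, ∑ z ∈ Finset.univ.filter (fun z => m z = w), π z * Q z ^ 2 := by
        refine Finset.sum_le_sum fun w _ => ?_
        rw [pi_mulVec]
        have hCS := Finset.sum_mul_sq_le_sq_mul_sq
          (Finset.univ.filter (fun z => m z = w))
          (fun z => Real.sqrt (π z)) (fun z => Real.sqrt (π z) * Q z)
        have h1 : ∀ z, Real.sqrt (π z) * (Real.sqrt (π z) * Q z) = π z * Q z := by
          intro z
          rw [← mul_assoc, Real.mul_self_sqrt (hπ z).le]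
        have h2 : ∀ z, Real.sqrt (π z) ^ 2 = π z := fun z => Real.sq_sqrt (hπ z).le
        have h3 : ∀ z, (Real.sqrt (π z) * Q z) ^ 2 = π z * Q z ^ 2 := by
          intro z; rw [mul_pow, h2]
        simp only [h1, h2, h3] at hCS
        have hvne : vmarg m π w ≠ 0 := (hv w).ne'
        rw [div_pow, show vmarg m π w *
              ((∑ z ∈ Finset.univ.filter (fun z => m z = w), π z * Q z) ^ 2 / vmarg m π w ^ 2)
            = (∑ z ∈ Finset.univ.filter (fun z => m z = w), π z * Q z) ^ 2 / vmarg m π w from by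
          field_simp]
        rw [div_le_iff₀ (hv w)]
        calc (∑ z ∈ Finset.univ.filter (fun z => m z = w), π z * Q z) ^ 2
            ≤ vmarg m π w * ∑ z ∈ Finset.univ.filter (fun z => m z = w), π z * Q z ^ 2 := hCS
          _ = (∑ z ∈ Finset.univ.filter (fun z => m z = w), π z * Q z ^ 2) * vmarg m π w := by
              ring
    _ = ∑ z, π z * Q z ^ 2 := Finset.sum_fiberwise _ _ _

end Helpers

/-- **Claim 2 (contraction and fixed points of the projected Bellman operator).**
`g` maps `Ξ̃` into `Ξ̃` and is a `μ_D`-contraction on `Ξ̃` in the `‖·‖_{D̃}` norm; hence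
it has a unique fixed point `Q̃*` in `Ξ̃`, and the set of all its fixed points is
`{Q̃* + c·1 : c ∈ ℝ}`. -/
theorem projected_bellman_contraction_fixed_points
    {Z W : Type*} [Fintype Z] [Nonempty Z] [DecidableEq Z]
    [Fintype W] [DecidableEq W]
    (P : Matrix Z Z ℝ) (π : Z → ℝ) (σ μD : ℝ)
    (hPnonneg : ∀ z z', 0 ≤ P z z')
    (hProw : ∀ z, ∑ z', P z z' = 1)
    (hσ : 0 < σ) (hπσ : ∀ z, σ ≤ π z) (hπ1 : ∑ z, π z = 1)
    (hstat : ∀ z', ∑ z, π z * P z z' = π z')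
    (hμD : μD ∈ Set.Ioo (0 : ℝ) 1)
    (hcontr : ∀ x : Z → ℝ,
      Dnorm π ((P - Matrix.of fun _ z' => π z').mulVec x) ≤ μD * Dnorm π x)
    (m : Z → W) (hm : Function.Surjective m)
    (r : Z → ℝ) :
    (∀ Qt ∈ XiTilde π m, gOp P π r m Qt ∈ XiTilde π m) ∧
    (∀ Qt ∈ XiTilde π m, ∀ Qt' ∈ XiTilde π m,
      DtildeNorm m π (gOp P π r m Qt - gOp P π r m Qt') ≤
        μD * DtildeNorm m π (Qt - Qt')) ∧
    (∃ Qstar : W → ℝ, Qstar ∈ XiTilde π m ∧ gOp P π r m Qstar = Qstar ∧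
      (∀ Qt ∈ XiTilde π m, gOp P π r m Qt = Qt → Qt = Qstar) ∧
      (∀ Qt : W → ℝ, gOp P π r m Qt = Qt ↔
        ∃ cc : ℝ, Qt = Qstar + Function.const W cc)) := by
  obtain ⟨hμ0, hμ1⟩ := hμD
  have hπpos : ∀ z, 0 < π z := fun z => lt_of_lt_of_le hσ (hπσ z)
  have hv : ∀ w, 0 < vmarg m π w := vmarg_pos m π hπpos hm
  -- membership in XiTilde rephrased
  have heq : ∀ Qt : W → ℝ,
      ∑ z, π z * ((PhiTilde m).mulVec Qt) z = ∑ w, vmarg m π w * Qt w := by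
    intro Qt; rw [phi_mulVec]; exact sum_fiber m π Qt
  have hXi : ∀ Qt : W → ℝ, Qt ∈ XiTilde π m ↔ ∑ w, vmarg m π w * Qt w = 0 := by
    intro Qt; rw [XiTilde, Set.mem_setOf_eq, heq]
  have hvsum : ∑ w, vmarg m π w = 1 := by
    have := sum_fiber m π (fun _ => 1)
    simpa [hπ1] using this.symm
  -- π-average of Pi.mulVec
  have hPiavg : ∀ Q : Z → ℝ, ∑ w, vmarg m π w * (PiProj m π).mulVec Q w = ∑ z, π z * Q z := by
    intro Q
    calc ∑ w, vmarg m π w * (PiProj m π).mulVec Q w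
        = ∑ w, ∑ z ∈ Finset.univ.filter (fun z => m z = w), π z * Q z := by
          refine Finset.sum_congr rfl fun w _ => ?_
          rw [pi_mulVec, mul_div_cancel₀ _ (hv w).ne']
      _ = ∑ z, π z * Q z := Finset.sum_fiberwise _ _ _
  -- π-average of TDop
  have hTDavg : ∀ Q : Z → ℝ, ∑ z, π z * TDop P π r Q z = ∑ z, π z * Q z := by
    intro Q
    simp only [TDop, mul_add, mul_sub, Finset.sum_add_distrib, Finset.sum_sub_distrib]
    rw [← Finset.sum_mul, hπ1, one_mul, sub_self, zero_add]
    calc ∑ z, π z * P.mulVec Q z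
        = ∑ z, ∑ z', π z * P z z' * Q z' := by
          refine Finset.sum_congr rfl fun z _ => ?_
          rw [Matrix.mulVec, dotProduct, Finset.mul_sum]
          exact Finset.sum_congr rfl fun z' _ => by ring
      _ = ∑ z', ∑ z, π z * P z z' * Q z' := Finset.sum_comm
      _ = ∑ z', π z' * Q z' := by
          refine Finset.sum_congr rfl fun z' _ => ?_
          rw [← Finset.sum_mul, hstat]
  -- Part 1: g maps XiTilde into XiTilde
  have hmap : ∀ Qt ∈ XiTilde π m, gOp P π r m Qt ∈ XiTilde π m := by
    intro Qt hQt
    rw [hXi]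
    rw [gOp, hPiavg, hTDavg]
    exact hQt
  -- Part 2: contraction
  have hcon : ∀ Qt ∈ XiTilde π m, ∀ Qt' ∈ XiTilde π m,
      DtildeNorm m π (gOp P π r m Qt - gOp P π r m Qt') ≤ μD * DtildeNorm m π (Qt - Qt') := by
    intro Qt hQt Qt' hQt'
    set x : W → ℝ := Qt - Qt' with hxdef
    have hx0 : ∑ z', π z' * ((PhiTilde m).mulVec x) z' = 0 := by
      rw [heq]
      have h1 := (hXi Qt).mp hQt
      have h2 := (hXi Qt').mp hQt'
      simp only [hxdef, Pi.sub_apply, mul_sub, Finset.sum_sub_distrib, h1, h2, sub_zero]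
    have hdiff : gOp P π r m Qt - gOp P π r m Qt'
        = (PiProj m π).mulVec
            ((P - Matrix.of fun _ z' => π z').mulVec ((PhiTilde m).mulVec x)) := by
      rw [gOp, gOp, ← Matrix.mulVec_sub]
      congr 1
      have hQQ : (PhiTilde m).mulVec x
          = (PhiTilde m).mulVec Qt - (PhiTilde m).mulVec Qt' := by
        rw [hxdef, Matrix.mulVec_sub]
      have hTD : TDop P π r ((PhiTilde m).mulVec Qt) - TDop P π r ((PhiTilde m).mulVec Qt')
          = P.mulVec ((PhiTilde m).mulVec x) := by
        funext z
        rw [hQQ, Matrix.mulVec_sub]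
        simp only [Pi.sub_apply, TDop]
        ring
      rw [hTD, Matrix.sub_mulVec]
      have hzero : (Matrix.of fun (_ : Z) z' => π z').mulVec ((PhiTilde m).mulVec x) = 0 := by
        funext z
        simp only [Matrix.mulVec, dotProduct, Matrix.of_apply, Pi.zero_apply]
        exact hx0
      rw [hzero, sub_zero]
    have h1 : DtildeNorm m π (gOp P π r m Qt - gOp P π r m Qt')
        ≤ Dnorm π ((P - Matrix.of fun _ z' => π z').mulVec ((PhiTilde m).mulVec x)) := by
      rw [hdiff, DtildeNorm, Dnorm]
      exact Real.sqrt_le_sqrt (pi_nonexpansive_sq m π hπpos hm _)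
    have h2 : Dnorm π ((P - Matrix.of fun _ z' => π z').mulVec ((PhiTilde m).mulVec x))
        ≤ μD * Dnorm π ((PhiTilde m).mulVec x) := hcontr ((PhiTilde m).mulVec x)
    have h3 : μD * Dnorm π ((PhiTilde m).mulVec x) = μD * DtildeNorm m π x := by
      congr 1
      rw [Dnorm, DtildeNorm, phi_mulVec]
      exact congrArg Real.sqrt (sum_fiber m π (fun w => x w ^ 2))
    exact h1.trans (h2.trans_eq h3)
  refine ⟨hmap, hcon, ?_⟩
  -- shift property
  have hshift : ∀ (Qt : W → ℝ) (c : ℝ),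
      gOp P π r m (Qt + Function.const W c) = gOp P π r m Qt + Function.const W c := by
    intro Qt c
    funext w
    have hTD : ∀ z, TDop P π r ((PhiTilde m).mulVec (Qt + Function.const W c)) z
        = TDop P π r ((PhiTilde m).mulVec Qt) z + c := by
      intro z
      simp only [TDop, phi_mulVec]
      have hP : P.mulVec (fun z' => (Qt + Function.const W c) (m z')) z
          = P.mulVec (fun z' => Qt (m z')) z + c := by
        simp only [Matrix.mulVec, dotProduct, Pi.add_apply, Function.const_apply,
          mul_add, Finset.sum_add_distrib, ← Finset.sum_mul, hProw z, one_mul]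
      rw [hP]; ring
    rw [Pi.add_apply, Function.const_apply, gOp, gOp, pi_mulVec, pi_mulVec]
    rw [Finset.sum_congr rfl (fun z _ => by rw [hTD z] :
      ∀ z ∈ Finset.univ.filter (fun z => m z = w),
        π z * TDop P π r ((PhiTilde m).mulVec (Qt + Function.const W c)) z
          = π z * (TDop P π r ((PhiTilde m).mulVec Qt) z + c))]
    simp only [mul_add, Finset.sum_add_distrib, ← Finset.sum_mul]
    rw [show (∑ z ∈ Finset.univ.filter (fun z => m z = w), π z) = vmarg m π w from rfl]
    rw [add_div, mul_comm, mul_div_assoc, div_self (hv w).ne', mul_one]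
  -- Euclidean transfer for Banach fixed point
  set sv : W → ℝ := fun w => Real.sqrt (vmarg m π w) with hsvdef
  have hsvpos : ∀ w, 0 < sv w := fun w => Real.sqrt_pos.mpr (hv w)
  have hsvsq : ∀ w, sv w * sv w = vmarg m π w := fun w => Real.mul_self_sqrt (hv w).le
  let φ : (W → ℝ) → EuclideanSpace ℝ W := fun Qt => WithLp.toLp 2 (fun w => sv w * Qt w : W → ℝ)
  let ψ : EuclideanSpace ℝ W → (W → ℝ) := fun x => fun w => x w / sv w
  have hψφ : ∀ Qt, ψ (φ Qt) = Qt := by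
    intro Qt; funext w
    exact mul_div_cancel_left₀ _ (hsvpos w).ne'
  have hφψ : ∀ x, φ (ψ x) = x := by
    intro x; apply WithLp.ofLp_injective; funext w
    show sv w * (x w / sv w) = x w
    rw [mul_comm, div_mul_cancel₀ _ (hsvpos w).ne']
  have hφnorm : ∀ u : W → ℝ, ‖φ u‖ = DtildeNorm m π u := by
    intro u
    rw [EuclideanSpace.norm_eq, DtildeNorm]
    congr 1
    refine Finset.sum_congr rfl fun w _ => ?_
    show ‖sv w * u w‖ ^ 2 = vmarg m π w * u w ^ 2
    rw [Real.norm_eq_abs, sq_abs, mul_pow, sq, hsvsq]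
  have hφsub : ∀ a b : W → ℝ, φ a - φ b = φ (a - b) := by
    intro a b; apply WithLp.ofLp_injective; funext w
    show sv w * a w - sv w * b w = sv w * (a w - b w)
    ring
  have hmem : ∀ Qt : W → ℝ, (∑ w, sv w * φ Qt w = 0) ↔ Qt ∈ XiTilde π m := by
    intro Qt
    rw [hXi]
    constructor <;> intro h
    · rw [← h]
      refine Finset.sum_congr rfl fun w _ => ?_
      show vmarg m π w * Qt w = sv w * (sv w * Qt w)
      rw [← mul_assoc, hsvsq]
    · rw [← h]
      refine Finset.sum_congr rfl fun w _ => ?_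
      show sv w * (sv w * Qt w) = vmarg m π w * Qt w
      rw [← mul_assoc, hsvsq]
  have hScont : Continuous fun x : EuclideanSpace ℝ W => ∑ w, sv w * x w := by
    refine continuous_finset_sum _ fun w _ => ?_
    exact continuous_const.mul (EuclideanSpace.proj (𝕜 := ℝ) w).continuous
  have hSclosed : IsClosed {x : EuclideanSpace ℝ W | ∑ w, sv w * x w = 0} :=
    isClosed_eq hScont continuous_const
  haveI : CompleteSpace {x : EuclideanSpace ℝ W // ∑ w, sv w * x w = 0} :=
    hSclosed.completeSpace_coe
  haveI : Nonempty {x : EuclideanSpace ℝ W // ∑ w, sv w * x w = 0} :=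
    ⟨⟨0, by simp [show ∀ w, (0 : EuclideanSpace ℝ W) w = 0 from fun _ => rfl]⟩⟩
  have hmemF : ∀ x : {x : EuclideanSpace ℝ W // ∑ w, sv w * x w = 0},
      ψ x.1 ∈ XiTilde π m := by
    intro x
    refine (hmem _).mp ?_
    rw [hφψ]
    exact x.2
  let F : {x : EuclideanSpace ℝ W // ∑ w, sv w * x w = 0} →
      {x : EuclideanSpace ℝ W // ∑ w, sv w * x w = 0} :=
    fun x => ⟨φ (gOp P π r m (ψ x.1)), (hmem _).mpr (hmap _ (hmemF x))⟩
  have hK : ContractingWith ⟨μD, hμ0.le⟩ F := by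
    constructor
    · exact_mod_cast hμ1
    · refine LipschitzWith.of_dist_le_mul fun x y => ?_
      rw [Subtype.dist_eq, Subtype.dist_eq, dist_eq_norm, dist_eq_norm]
      show ‖φ (gOp P π r m (ψ x.1)) - φ (gOp P π r m (ψ y.1))‖ ≤ _
      rw [hφsub, hφnorm]
      have h1 : DtildeNorm m π (gOp P π r m (ψ x.1) - gOp P π r m (ψ y.1))
          ≤ μD * DtildeNorm m π (ψ x.1 - ψ y.1) := hcon _ (hmemF x) _ (hmemF y)
      have h2 : μD * DtildeNorm m π (ψ x.1 - ψ y.1) = μD * ‖x.1 - y.1‖ := by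
        rw [← hφnorm, ← hφsub, hφψ, hφψ]
      have h3 : μD * ‖x.1 - y.1‖ = (⟨μD, hμ0.le⟩ : NNReal) * ‖x.1 - y.1‖ := by norm_num
      exact h1.trans_eq (h2.trans h3)
  let xstar := ContractingWith.fixedPoint F hK
  have hfix : F xstar = xstar := hK.fixedPoint_isFixedPt
  set Qstar : W → ℝ := ψ xstar.1 with hQdef
  have hQmem : Qstar ∈ XiTilde π m := hmemF xstar
  have hgQ : gOp P π r m Qstar = Qstar := by
    have h1 : φ (gOp P π r m Qstar) = φ Qstar := by
      have h2 := congrArg Subtype.val hfix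
      rw [show (F xstar).1 = φ (gOp P π r m Qstar) from rfl] at h2
      rw [h2, hQdef, hφψ]
    have h3 := congrArg ψ h1
    rwa [hψφ, hψφ] at h3
  have huniq : ∀ Qt ∈ XiTilde π m, gOp P π r m Qt = Qt → Qt = Qstar := by
    intro Qt hQt hfixQ
    have h := hcon Qt hQt Qstar hQmem
    rw [hfixQ, hgQ] at h
    by_contra hne
    have hpos : 0 < DtildeNorm m π (Qt - Qstar) := by
      rw [DtildeNorm]
      apply Real.sqrt_pos.mpr
      have hnz : ∃ w, Qt w ≠ Qstar w := by
        by_contra hall; push_neg at hall; exact hne (funext hall)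
      obtain ⟨w, hw⟩ := hnz
      refine Finset.sum_pos' (fun w _ => mul_nonneg (hv w).le (sq_nonneg _)) ?_
      refine ⟨w, Finset.mem_univ w, mul_pos (hv w) ?_⟩
      rw [Pi.sub_apply]
      exact pow_two_pos_of_ne_zero (sub_ne_zero.mpr hw)
    nlinarith
  refine ⟨Qstar, hQmem, hgQ, huniq, fun Qt => ?_⟩
  constructor
  · intro hfixQ
    set c := ∑ w, vmarg m π w * Qt w with hcdef
    have h1 : Qt - Function.const W c ∈ XiTilde π m := by
      rw [hXi]
      simp only [Pi.sub_apply, Function.const_apply, mul_sub, Finset.sum_sub_distrib,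
        ← Finset.sum_mul, hvsum, one_mul]
      rw [← hcdef, sub_self]
    have hback : Qt - Function.const W c + Function.const W c = Qt := by
      funext w; simp
    have h2 : gOp P π r m (Qt - Function.const W c) = Qt - Function.const W c := by
      have h3 := hshift (Qt - Function.const W c) c
      rw [hback, hfixQ] at h3
      rw [eq_sub_iff_add_eq]
      exact h3.symm
    have h4 := huniq _ h1 h2
    refine ⟨c, ?_⟩
    rw [← h4]
    funext w; simp
  · rintro ⟨c, rfl⟩
    rw [hshift Qstar c, hgQ]
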